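/- Let ū¹,…,ū^{N−1} and v̄¹,…,v̄^N be finite tuples of complex numbers with |ū^j| = |v̄^j| for 1 ≤ j ≤ N−1. Then the enlarged rectangular partition function factorizes as K(ū¹,…,ū^{N−1} | v̄¹,…,v̄^N) = Π_{j=1}^{N−1}(qū^j − q⁻¹v̄^N) · H(ū¹,…,ū^{N−1} | v̄¹,…,v̄^{N−1}). -/

import Mathlib

open scoped BigOperators

noncomputable section

namespace MultComm

/-- Entries of the trigonometric R-matrix: row `p = (k,ℓ)`, column `c = (i,j)`,
so that `R e_i ⊗ e_j = ∑ [R]_{ij}^{kℓ} e_k ⊗ e_ℓ`. -/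
def Rtrig (N : ℕ) (q : ℂ) (u v : ℂ) : Matrix (Fin N × Fin N) (Fin N × Fin N) ℂ :=
  Matrix.of fun p c =>
    if p = c then (if c.1 = c.2 then q * u - q⁻¹ * v else u - v)
    else if p.1 = c.2 ∧ p.2 = c.1 then
      (if (p.1 : ℕ) < (p.2 : ℕ) then (q - q⁻¹) * v else (q - q⁻¹) * u)
    else 0

/-- The second trigonometric R-matrix convention. -/
def Rtrig2 (N : ℕ) (q : ℂ) (u v : ℂ) : Matrix (Fin N × Fin N) (Fin N × Fin N) ℂ :=
  Matrix.of fun p c =>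
    if p = c then (if c.1 = c.2 then q * u - q⁻¹ * v else u - v)
    else if p.1 = c.2 ∧ p.2 = c.1 then
      (if (p.1 : ℕ) < (p.2 : ℕ) then (q - q⁻¹) * u else (q - q⁻¹) * v)
    else 0

/-- The rational R-matrix. -/
def Rrat (N : ℕ) (h : ℂ) (x y : ℂ) : Matrix (Fin N × Fin N) (Fin N × Fin N) ℂ :=
  Matrix.of fun p c =>
    if p = c then (if c.1 = c.2 then x - y + h else x - y)
    else if p.1 = c.2 ∧ p.2 = c.1 then h
    else 0

/-- An R-matrix acting in the auxiliary space `0` and the `k`-th quantum space. -/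
def Raux (N n : ℕ) (Rm : Matrix (Fin N × Fin N) (Fin N × Fin N) ℂ) (k : Fin n) :
    Matrix (Fin N × (Fin n → Fin N)) (Fin N × (Fin n → Fin N)) ℂ :=
  Matrix.of fun p c =>
    if (∀ j, j ≠ k → p.2 j = c.2 j) then Rm (p.1, p.2 k) (c.1, c.2 k) else 0

/-- The monodromy matrix `T^vect(u; ξ) = R_{0n}(u,ξ_n) ⋯ R_{01}(u,ξ_1)`. -/
def Tmon (N n : ℕ) (Rm : ℂ → ℂ → Matrix (Fin N × Fin N) (Fin N × Fin N) ℂ)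
    (u : ℂ) (ξ : Fin n → ℂ) :
    Matrix (Fin N × (Fin n → Fin N)) (Fin N × (Fin n → Fin N)) ℂ :=
  (((List.finRange n).reverse).map (fun k => Raux N n (Rm u (ξ k)) k)).prod

/-- The entry `T_{ij}(u; ξ)`, an operator on the quantum spaces. -/
def Tent (N n : ℕ) (Rm : ℂ → ℂ → Matrix (Fin N × Fin N) (Fin N × Fin N) ℂ)
    (i j : Fin N) (u : ℂ) (ξ : Fin n → ℂ) :
    Matrix (Fin n → Fin N) (Fin n → Fin N) ℂ :=
  Matrix.of fun f g => Tmon N n Rm u ξ (i, f) (j, g)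

/-- Product of the (commuting) entries `T_{ij}(u;ξ)` over a list of spectral parameters. -/
def TentL (N n : ℕ) (Rm : ℂ → ℂ → Matrix (Fin N × Fin N) (Fin N × Fin N) ℂ)
    (i j : Fin N) (l : List ℂ) (ξ : Fin n → ℂ) :
    Matrix (Fin n → Fin N) (Fin n → Fin N) ℂ :=
  (l.map (fun u => Tent N n Rm i j u ξ)).prod

/-- Product of the entries `T_{ij}(w_k;ξ)` over a finite index set. -/
def TentS (N n : ℕ) (Rm : ℂ → ℂ → Matrix (Fin N × Fin N) (Fin N × Fin N) ℂ)
    (i j : Fin N) (w : Fin n → ℂ) (s : Finset (Fin n)) (ξ : Fin n → ℂ) :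
    Matrix (Fin n → Fin N) (Fin n → Fin N) ℂ :=
  TentL N n Rm i j (s.toList.map w) ξ

/-- The basis vector `e_{f}` of `V^{⊗ n}`. -/
def bvec (N n : ℕ) (f : Fin n → Fin N) : (Fin n → Fin N) → ℂ :=
  fun g => if g = f then 1 else 0

/-- The RTT relation for an `N×N` matrix of generators over an algebra `A`. -/
def RTT (N : ℕ) (Rm : ℂ → ℂ → Matrix (Fin N × Fin N) (Fin N × Fin N) ℂ)
    (A : Type*) [Ring A] [Algebra ℂ A] (D : Finset ℂ)
    (T : ℂ → Fin N → Fin N → A) : Prop :=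
  ∀ u ∈ D, ∀ v ∈ D, ∀ i j k l : Fin N,
    (∑ a : Fin N, ∑ b : Fin N, Rm u v (i, j) (a, b) • (T u a k * T v b l)) =
    (∑ a : Fin N, ∑ b : Fin N, Rm u v (a, b) (k, l) • (T v j b * T u i a))

/-- Ordered product of generators over a finite index set. -/
def Aprod {A : Type*} [Monoid A] {n : ℕ} (f : ℂ → A) (w : Fin n → ℂ)
    (s : Finset (Fin n)) : A :=
  (s.toList.map (fun k => f (w k))).prod

/-- Pair product `∏_{a∈s} ∏_{b∈t} (α w_a - β w_b + γ)`. -/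
def wpair {n : ℕ} (w : Fin n → ℂ) (s t : Finset (Fin n)) (α β γ : ℂ) : ℂ :=
  ∏ a ∈ s, ∏ b ∈ t, (α * w a - β * w b + γ)

/-- The 1-based block of a colouring. -/
def blk {n N : ℕ} (c : Fin n → Fin N) (j : ℕ) : Finset (Fin n) :=
  Finset.univ.filter (fun k => (c k : ℕ) + 1 = j)

/-- The block of a colouring with a given colour. -/
def blkF {n N : ℕ} (c : Fin n → Fin N) (j : Fin N) : Finset (Fin n) :=
  Finset.univ.filter (fun k => c k = j)

/-- One layer of the trigonometric weight function. -/
def layerT (q : ℂ) {m l : ℕ} (x : Fin m → ℂ) (y : Fin l → ℂ) : ℂ :=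
  (∏ a : Fin m,
      ((∏ i ∈ Finset.univ.filter (fun i : Fin l => (i : ℕ) < (a : ℕ)), (x a - y i))
        * ((q - q⁻¹) * x a)
        * ∏ i ∈ Finset.univ.filter (fun i : Fin l => (a : ℕ) < (i : ℕ)),
            (q * x a - q⁻¹ * y i)))
    * ∏ a : Fin m, ∏ b ∈ Finset.univ.filter (fun b : Fin m => (a : ℕ) < (b : ℕ)),
        ((q⁻¹ * x a - q * x b) / (x a - x b))

/-- One layer of the rational weight function. -/
def layerR (h : ℂ) {m l : ℕ} (x : Fin m → ℂ) (y : Fin l → ℂ) : ℂ :=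
  (∏ a : Fin m,
      ((∏ i ∈ Finset.univ.filter (fun i : Fin l => (i : ℕ) < (a : ℕ)), (x a - y i))
        * h
        * ∏ i ∈ Finset.univ.filter (fun i : Fin l => (a : ℕ) < (i : ℕ)),
            (x a - y i + h)))
    * ∏ a : Fin m, ∏ b ∈ Finset.univ.filter (fun b : Fin m => (a : ℕ) < (b : ℕ)),
        ((x a - x b - h) / (x a - x b))

/-- The specialised trigonometric weight function for the colour sequence
`(1^{k_1}, 2^{k_2-k_1}, …, N^{L-k_{N-1}})`. -/
def Wtrig (q : ℂ) (M : ℕ) (k : Fin M → ℕ) (L : ℕ)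
    (U : (p : Fin M) → Fin (k p) → ℂ) (V : Fin L → ℂ) : ℂ :=
  ∑ σ : ((p : Fin M) → Equiv.Perm (Fin (k p))),
    ∏ p : Fin M,
      if h : (p : ℕ) + 1 < M then
        layerT q (fun a => U p (σ p a))
          (fun i => U ⟨(p : ℕ) + 1, h⟩ (σ ⟨(p : ℕ) + 1, h⟩ i))
      else
        layerT q (fun a => U p (σ p a)) V

/-- The specialised rational weight function. -/
def Wrat (h : ℂ) (M : ℕ) (k : Fin M → ℕ) (L : ℕ)
    (U : (p : Fin M) → Fin (k p) → ℂ) (V : Fin L → ℂ) : ℂ :=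
  ∑ σ : ((p : Fin M) → Equiv.Perm (Fin (k p))),
    ∏ p : Fin M,
      if hp : (p : ℕ) + 1 < M then
        layerR h (fun a => U p (σ p a))
          (fun i => U ⟨(p : ℕ) + 1, hp⟩ (σ ⟨(p : ℕ) + 1, hp⟩ i))
      else
        layerR h (fun a => U p (σ p a)) V

/-- The trigonometric Izergin–Korepin determinant. -/
def IKtrig (q : ℂ) {m : ℕ} (u v : Fin m → ℂ) : ℂ :=
  (∏ i : Fin m, ∏ j ∈ Finset.univ.filter (fun j : Fin m => i < j),
      ((u i - u j) * (v j - v i)))⁻¹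
    * Matrix.det (Matrix.of fun i j : Fin m =>
        (q - q⁻¹) * u i *
          ∏ k ∈ Finset.univ.filter (fun k : Fin m => k ≠ j),
            ((q * u i - q⁻¹ * v k) * (u i - v k)))

/-- The rational Izergin–Korepin determinant. -/
def IKrat (h : ℂ) {m : ℕ} (x y : Fin m → ℂ) : ℂ :=
  (∏ i : Fin m, ∏ j ∈ Finset.univ.filter (fun j : Fin m => i < j),
      ((x i - x j) * (y j - y i)))⁻¹
    * Matrix.det (Matrix.of fun i j : Fin m =>
        h * ∏ k ∈ Finset.univ.filter (fun k : Fin m => k ≠ j),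
            ((x i - y k + h) * (x i - y k)))

/-- The number of inversions of a permutation of `Fin r`. -/
def invCount {r : ℕ} (σ : Equiv.Perm (Fin r)) : ℕ :=
  (Finset.univ.filter (fun p : Fin r × Fin r => p.1 < p.2 ∧ σ p.2 < σ p.1)).card

/-- The quantum determinant `qdet T^{(r)}(u)` in the vector representation. -/
def qdetT (N n : ℕ) (q : ℂ) (w : Fin n → ℂ) (r : ℕ) (hr : r ≤ N) (u : ℂ) :
    Matrix (Fin n → Fin N) (Fin n → Fin N) ℂ :=
  ∑ σ : Equiv.Perm (Fin r),
    ((-q) ^ (-(invCount σ : ℤ))) •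
      (((List.finRange r).reverse.map
          (fun i => Tent N n (Rtrig N q) (Fin.castLE hr i) (Fin.castLE hr (σ i))
            (q ^ (2 * (i : ℕ)) * u) w)).prod)

end MultComm

open MultComm

section Aux
variable {N n : ℕ}

lemma snoc_eq_snoc_iff {α : Type*} {n : ℕ} (f g : Fin n → α) (x y : α) :
    (Fin.snoc f x : Fin (n+1) → α) = Fin.snoc g y ↔ f = g ∧ x = y := by
  constructor
  · intro h
    constructor
    · funext i; have := congrFun h (Fin.castSucc i); simpa using this
    · have := congrFun h (Fin.last n); simpa using this
  · rintro ⟨rfl, rfl⟩; rfl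

lemma forall_ne_snoc (k : Fin n) (f g : Fin n → Fin N) (x y : Fin N) :
    (∀ j, j ≠ Fin.castSucc k → (Fin.snoc f x : Fin (n+1) → Fin N) j = (Fin.snoc g y : Fin (n+1) → Fin N) j) ↔
      (x = y ∧ ∀ j, j ≠ k → f j = g j) := by
  constructor
  · intro h
    refine ⟨?_, fun j hj => ?_⟩
    · have := h (Fin.last n) (Fin.castSucc_lt_last k).ne'
      simpa using this
    · have := h (Fin.castSucc j) (by simpa [Fin.castSucc_inj] using hj)
      simpa using this
  · rintro ⟨rfl, h⟩ j hj
    induction j using Fin.lastCases with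
    | last => simp
    | cast i =>
        simp only [Fin.snoc_castSucc]
        exact h i (by rintro rfl; exact hj rfl)

lemma forall_ne_last (f g : Fin n → Fin N) (x y : Fin N) :
    (∀ j, j ≠ Fin.last n → (Fin.snoc f x : Fin (n+1) → Fin N) j = (Fin.snoc g y : Fin (n+1) → Fin N) j) ↔ f = g := by
  constructor
  · intro h; funext i
    have := h (Fin.castSucc i) (Fin.castSucc_lt_last i).ne
    simpa using this
  · rintro rfl j hj
    induction j using Fin.lastCases with
    | last => exact absurd rfl hj
    | cast i => simp

lemma raux_snoc_castSucc (M : Matrix (Fin N × Fin N) (Fin N × Fin N) ℂ)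
    (k : Fin n) (a b : Fin N) (f g : Fin n → Fin N) (x y : Fin N) :
    Raux N (n+1) M (Fin.castSucc k) (a, Fin.snoc f x) (b, Fin.snoc g y) =
      if x = y then Raux N n M k (a, f) (b, g) else 0 := by
  simp only [Raux, Matrix.of_apply]
  by_cases hxy : x = y
  · subst hxy
    rw [if_pos rfl]
    by_cases hc : ∀ j, j ≠ k → f j = g j
    · rw [if_pos ((forall_ne_snoc k f g x x).mpr ⟨rfl, hc⟩), if_pos hc,
        Fin.snoc_castSucc, Fin.snoc_castSucc]
    · rw [if_neg (fun h => hc ((forall_ne_snoc k f g x x).mp h).2), if_neg hc]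
  · rw [if_neg hxy, if_neg (fun h => hxy ((forall_ne_snoc k f g x y).mp h).1)]

lemma raux_snoc_last (M : Matrix (Fin N × Fin N) (Fin N × Fin N) ℂ)
    (a b : Fin N) (f g : Fin n → Fin N) (x y : Fin N) :
    Raux N (n+1) M (Fin.last n) (a, Fin.snoc f x) (b, Fin.snoc g y) =
      if f = g then M (a, x) (b, y) else 0 := by
  simp only [Raux, Matrix.of_apply]
  by_cases hfg : f = g
  · rw [if_pos ((forall_ne_last f g x y).mpr hfg), if_pos hfg,
      Fin.snoc_last, Fin.snoc_last]
  · rw [if_neg (fun h => hfg ((forall_ne_last f g x y).mp h)), if_neg hfg]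

end Aux

section Aux2
variable {N n : ℕ}

lemma prod_raux_castSucc (Ms : Fin n → Matrix (Fin N × Fin N) (Fin N × Fin N) ℂ)
    (l : List (Fin n)) :
    ∀ (a b : Fin N) (f g : Fin n → Fin N) (x y : Fin N),
    ((l.map (fun k => Raux N (n+1) (Ms k) (Fin.castSucc k))).prod)
        (a, Fin.snoc f x) (b, Fin.snoc g y)
      = if x = y then ((l.map (fun k => Raux N n (Ms k) k)).prod) (a, f) (b, g) else 0 := by
  induction l with
  | nil =>
      intro a b f g x y
      simp only [List.map_nil, List.prod_nil, Matrix.one_apply, Prod.mk.injEq,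
        snoc_eq_snoc_iff]
      by_cases hxy : x = y
      · subst hxy
        simp
      · simp [hxy]
  | cons k t ih =>
      intro a b f g x y
      simp only [List.map_cons, List.prod_cons, Matrix.mul_apply]
      rw [Fintype.sum_prod_type]
      have hsum : ∀ c : Fin N,
          (∑ h : Fin (n+1) → Fin N,
            Raux N (n+1) (Ms k) (Fin.castSucc k) (a, Fin.snoc f x) (c, h) *
              ((t.map (fun k => Raux N (n+1) (Ms k) (Fin.castSucc k))).prod) (c, h)
                (b, Fin.snoc g y))
          = ∑ p : Fin N × (Fin n → Fin N),
              Raux N (n+1) (Ms k) (Fin.castSucc k) (a, Fin.snoc f x) (c, Fin.snoc p.2 p.1) *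
              ((t.map (fun k => Raux N (n+1) (Ms k) (Fin.castSucc k))).prod)
                (c, Fin.snoc p.2 p.1) (b, Fin.snoc g y) := by
        intro c
        exact (Fintype.sum_equiv (Fin.snocEquiv (fun _ => Fin N))
          _ _ (fun p => rfl)).symm
      simp only [hsum]
      clear hsum
      by_cases hxy : x = y
      · subst hxy
        rw [if_pos rfl]
        simp only [Fintype.sum_prod_type, raux_snoc_castSucc, ih]
        refine Finset.sum_congr rfl fun c _ => ?_
        rw [Finset.sum_comm]
        simp
      · rw [if_neg hxy]
        simp only [Fintype.sum_prod_type, raux_snoc_castSucc, ih]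
        apply Finset.sum_eq_zero; intro c _
        apply Finset.sum_eq_zero; intro z _
        apply Finset.sum_eq_zero; intro f' _
        by_cases hxz : x = z
        · subst hxz
          rw [if_neg hxy, mul_zero]
        · rw [if_neg hxz, zero_mul]

lemma tmon_snoc (Rm : ℂ → ℂ → Matrix (Fin N × Fin N) (Fin N × Fin N) ℂ)
    (u : ℂ) (ξ : Fin (n+1) → ℂ) (i j : Fin N) (f g : Fin n → Fin N) (x y : Fin N) :
    Tmon N (n+1) Rm u ξ (i, Fin.snoc f x) (j, Fin.snoc g y) =
      ∑ a : Fin N, Rm u (ξ (Fin.last n)) (i, x) (a, y) *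
        Tmon N n Rm u (fun k => ξ (Fin.castSucc k)) (a, f) (j, g) := by
  unfold Tmon
  conv_lhs => rw [List.finRange_succ_last, List.reverse_append, List.reverse_singleton,
    List.singleton_append, ← List.map_reverse, List.map_cons, List.map_map,
    List.prod_cons]
  rw [Matrix.mul_apply, Fintype.sum_prod_type]
  have hsum : ∀ c : Fin N,
      (∑ h : Fin (n+1) → Fin N,
        Raux N (n+1) (Rm u (ξ (Fin.last n))) (Fin.last n) (i, Fin.snoc f x) (c, h) *
          (((List.finRange n).reverse.map
            ((fun k => Raux N (n+1) (Rm u (ξ k)) k) ∘ Fin.castSucc)).prod) (c, h)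
              (j, Fin.snoc g y))
      = ∑ p : Fin N × (Fin n → Fin N),
          Raux N (n+1) (Rm u (ξ (Fin.last n))) (Fin.last n) (i, Fin.snoc f x)
              (c, Fin.snoc p.2 p.1) *
          (((List.finRange n).reverse.map
            ((fun k => Raux N (n+1) (Rm u (ξ k)) k) ∘ Fin.castSucc)).prod)
              (c, Fin.snoc p.2 p.1) (j, Fin.snoc g y) := by
    intro c
    exact (Fintype.sum_equiv (Fin.snocEquiv (fun _ => Fin N)) _ _ (fun p => rfl)).symm
  simp only [hsum]
  clear hsum
  have hrest : ∀ (c : Fin N) (f' : Fin n → Fin N) (z : Fin N),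
      (((List.finRange n).reverse.map
        ((fun k => Raux N (n+1) (Rm u (ξ k)) k) ∘ Fin.castSucc)).prod)
          (c, Fin.snoc f' z) (j, Fin.snoc g y)
      = if z = y then (((List.finRange n).reverse.map
          (fun k => Raux N n (Rm u (ξ (Fin.castSucc k))) k)).prod) (c, f') (j, g) else 0 := by
    intro c f' z
    have := prod_raux_castSucc (N := N) (n := n)
      (fun k => Rm u (ξ (Fin.castSucc k))) (List.finRange n).reverse c j f' g z y
    simpa [Function.comp_def] using this
  simp only [Fintype.sum_prod_type, hrest, raux_snoc_last]
  refine Finset.sum_congr rfl fun c _ => ?_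
  simp

end Aux2

section Aux3
variable {N n : ℕ}

lemma rtrig_top (q u v : ℂ) (top a y : Fin N) :
    Rtrig N q u v (top, top) (a, y) = if a = top ∧ y = top then q * u - q⁻¹ * v else 0 := by
  simp only [Rtrig, Matrix.of_apply]
  by_cases h : a = top ∧ y = top
  · obtain ⟨rfl, rfl⟩ := h
    simp
  · rw [if_neg h, if_neg, if_neg]
    · rintro ⟨h1, h2⟩
      exact h ⟨h2.symm, h1.symm⟩
    · intro hc
      rw [Prod.mk.injEq] at hc
      exact h ⟨hc.1.symm, hc.2.symm⟩

lemma tent_top_snoc (q : ℂ) (top j : Fin N) (u : ℂ) (ξ : Fin (n+1) → ℂ)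
    (f g : Fin n → Fin N) (y : Fin N) :
    Tent N (n+1) (Rtrig N q) top j u ξ (Fin.snoc f top) (Fin.snoc g y) =
      (if y = top then (q * u - q⁻¹ * ξ (Fin.last n)) else 0) *
        Tent N n (Rtrig N q) top j u (fun k => ξ (Fin.castSucc k)) f g := by
  simp only [Tent, Matrix.of_apply]
  rw [tmon_snoc]
  simp only [rtrig_top]
  by_cases hy : y = top
  · rw [if_pos hy]
    rw [Finset.sum_eq_single top]
    · rw [if_pos ⟨rfl, hy⟩]
    · intro a _ ha
      rw [if_neg (fun h => ha h.1), zero_mul]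
    · intro h
      exact absurd (Finset.mem_univ top) h
  · rw [if_neg hy, zero_mul]
    apply Finset.sum_eq_zero; intro a _
    rw [if_neg (fun h => hy h.2), zero_mul]

lemma prod_tent_top_snoc (q : ℂ) (top : Fin N) (L : List (ℂ × Fin N))
    (ξ : Fin (n+1) → ℂ) :
    ∀ (f g : Fin n → Fin N),
    ((L.map (fun p => Tent N (n+1) (Rtrig N q) top p.2 p.1 ξ)).prod)
        (Fin.snoc f top) (Fin.snoc g top) =
      (L.map (fun p => q * p.1 - q⁻¹ * ξ (Fin.last n))).prod *
        ((L.map (fun p => Tent N n (Rtrig N q) top p.2 p.1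
            (fun k => ξ (Fin.castSucc k)))).prod) f g := by
  induction L with
  | nil =>
      intro f g
      simp [Matrix.one_apply, snoc_eq_snoc_iff]
  | cons p t ih =>
      intro f g
      simp only [List.map_cons, List.prod_cons, Matrix.mul_apply]
      rw [show (∑ h : Fin (n+1) → Fin N,
            Tent N (n+1) (Rtrig N q) top p.2 p.1 ξ (Fin.snoc f top) h *
              ((t.map (fun p => Tent N (n+1) (Rtrig N q) top p.2 p.1 ξ)).prod) h
                (Fin.snoc g top))
          = ∑ r : Fin N × (Fin n → Fin N),
              Tent N (n+1) (Rtrig N q) top p.2 p.1 ξ (Fin.snoc f top) (Fin.snoc r.2 r.1) *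
              ((t.map (fun p => Tent N (n+1) (Rtrig N q) top p.2 p.1 ξ)).prod)
                (Fin.snoc r.2 r.1) (Fin.snoc g top)
          from (Fintype.sum_equiv (Fin.snocEquiv (fun _ => Fin N)) _ _ (fun r => rfl)).symm]
      rw [Fintype.sum_prod_type]
      simp only [tent_top_snoc]
      rw [Finset.sum_eq_single top]
      · simp only [ih, eq_self_iff_true, if_true]
        rw [Finset.mul_sum]
        refine Finset.sum_congr rfl fun f' _ => ?_
        ring
      · intro z _ hz
        apply Finset.sum_eq_zero; intro f' _
        rw [if_neg hz, zero_mul, zero_mul]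
      · intro h
        exact absurd (Finset.mem_univ top) h

end Aux3

section Aux4

lemma const_top_snoc {N m : ℕ} (top : Fin N) :
    (fun _ : Fin (m+1) => top) = Fin.snoc (fun _ : Fin m => top) top := by
  funext i
  induction i using Fin.lastCases with
  | last => simp
  | cast i => simp

lemma key_lemma (N n' : ℕ) (q : ℂ) (top : Fin N) (L : List (ℂ × Fin N)) (ξ : Fin n' → ℂ) :
    ∀ (m : ℕ) (vN : Fin m → ℂ) (row : Fin n' → Fin N),
    ((L.map (fun p => Tent N (n' + m) (Rtrig N q) top p.2 p.1 (Fin.append ξ vN))).prod)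
        (Fin.append row (fun _ => top)) (fun _ => top) =
      (L.map (fun p => ∏ b : Fin m, (q * p.1 - q⁻¹ * vN b))).prod *
        ((L.map (fun p => Tent N n' (Rtrig N q) top p.2 p.1 ξ)).prod) row (fun _ => top) := by
  intro m
  induction m with
  | zero =>
      intro vN row
      have h1 : Fin.append ξ vN = ξ := by
        funext i
        have hi : (i : ℕ) < n' := i.isLt
        have h2 : i = Fin.castAdd 0 ⟨(i : ℕ), hi⟩ := by
          apply Fin.ext; rfl
        rw [h2, Fin.append_left]
        rfl
      have h2 : Fin.append row (fun _ : Fin 0 => top) = row := by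
        funext i
        have hi : (i : ℕ) < n' := i.isLt
        have h3 : i = Fin.castAdd 0 ⟨(i : ℕ), hi⟩ := by
          apply Fin.ext; rfl
        rw [h3, Fin.append_left]
        rfl
      rw [h1, h2]
      simp
  | succ m ih =>
      intro vN row
      have hrow : Fin.append row (fun _ : Fin (m+1) => top) =
          Fin.snoc (Fin.append row (fun _ : Fin m => top)) top := by
        rw [const_top_snoc (m := m) top, Fin.append_snoc]
      have hcol : (fun _ : Fin (n' + (m+1)) => top) =
          Fin.snoc (fun _ : Fin (n' + m) => top) top :=
        const_top_snoc (m := n' + m) top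
      rw [hrow, hcol]
      refine Eq.trans (prod_tent_top_snoc (N := N) (n := n' + m) q top L
        ((Fin.append ξ vN : Fin (n' + (m+1)) → ℂ))
        (Fin.append row (fun _ : Fin m => top)) (fun _ : Fin (n' + m) => top)) ?_
      have hlast : (Fin.append ξ vN) (Fin.last (n' + m)) = vN (Fin.last m) := by
        have h5 : Fin.last (n' + m) = Fin.natAdd n' (Fin.last m) := by
          apply Fin.ext; rfl
        rw [h5, Fin.append_right]
      have hcast : (fun k : Fin (n' + m) => (Fin.append ξ vN) (Fin.castSucc k)) =
          Fin.append ξ (Fin.init vN) := by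
        funext k
        induction k using Fin.addCases with
        | left i =>
            have h6 : Fin.castSucc (Fin.castAdd m i) = Fin.castAdd (m+1) i := by
              apply Fin.ext; rfl
            rw [h6, Fin.append_left, Fin.append_left]
        | right i =>
            have h7 : Fin.castSucc (Fin.natAdd n' i) = Fin.natAdd n' (Fin.castSucc i) := by
              apply Fin.ext; rfl
            rw [h7, Fin.append_right, Fin.append_right]
            rfl
      rw [hlast, hcast, ih (Fin.init vN) row, ← mul_assoc]
      congr 1
      rw [← List.prod_map_mul]
      refine congrArg List.prod (List.map_congr_left fun p _ => ?_)
      rw [Fin.prod_univ_castSucc]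
      simp only [Fin.init]
      ring
end Aux4



open MultComm in
/-- The enlarged rectangular partition function `K` factorises as an
explicit product times the rectangular partition function `H`. -/
theorem K_eq_factor_mul_H
    (N : ℕ) (hN : 2 ≤ N) (q : ℂ) (hq : q ≠ 0)
    (n' nN : ℕ)
    (uval : Fin n' → ℂ) (col : Fin n' → Fin (N - 1)) (hcol : Monotone col)
    (ξ : Fin n' → ℂ) (vN : Fin nN → ℂ) :
    (((List.finRange n').map (fun i =>
        Tent N (n' + nN) (Rtrig N q)
          ⟨N - 1, by omega⟩ (Fin.castLE (by omega) (col i))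
          (uval i) (Fin.append ξ vN))).prod)
      (Fin.append (fun i => Fin.castLE (by omega) (col i)) (fun _ => ⟨N - 1, by omega⟩))
      (fun _ => ⟨N - 1, by omega⟩)
      =
    (∏ i : Fin n', ∏ b : Fin nN, (q * uval i - q⁻¹ * vN b))
      * (((List.finRange n').map (fun i =>
            Tent N n' (Rtrig N q)
              ⟨N - 1, by omega⟩ (Fin.castLE (by omega) (col i))
              (uval i) ξ)).prod)
          (fun i => Fin.castLE (by omega) (col i)) (fun _ => ⟨N - 1, by omega⟩) := by
  
  have hk := key_lemma N n' q ⟨N - 1, by omega⟩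
    ((List.finRange n').map (fun i => (uval i, Fin.castLE (by omega : N - 1 ≤ N) (col i))))
    ξ nN vN (fun i => Fin.castLE (by omega) (col i))
  rw [List.map_map, List.map_map, List.map_map] at hk
  have h2 : (∏ i : Fin n', ∏ b : Fin nN, (q * uval i - q⁻¹ * vN b)) =
      ((List.finRange n').map fun i => ∏ b : Fin nN, (q * uval i - q⁻¹ * vN b)).prod :=
    Fin.prod_univ_def _
  rw [h2]
  exact hk
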